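/- arXiv:1210.2120 — 2 statements merged into one kernel-verified Lean document; each statement's English description precedes it below -/
import Mathlib

section
/- Let λ be an infinite regular cardinal and let K be a class of nonempty topological spaces. Then the following are equivalent: (1) every product of members of K (repetitions among the factors allowed) satisfies CAP_λ; (2) every product of 2^{2^{λ}} many members of K (repetitions allowed) satisfies CAP_λ; (3) there exists a uniform ultrafilter F on λ such that every member of K is F-compact. -/
universe u v

open Cardinal

/-- `p` is an `F`-limit point of the sequence `s`. -/
def FLimitPt {I : Type*} {X : Type*} [TopologicalSpace X] (F : Filter I)
    (s : I → X) (p : X) : Prop :=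
  ∀ U : Set X, IsOpen U → p ∈ U → {i | s i ∈ U} ∈ F

/-- `X` is `F`-compact: every sequence indexed by the underlying set of `F`
has an `F`-limit point. -/
def FCompact {I : Type*} (F : Filter I) (X : Type*) [TopologicalSpace X] : Prop :=
  ∀ s : I → X, ∃ p : X, FLimitPt F s p

/-- `X` satisfies `CAP lam`: every subset of cardinality `lam` has a complete
accumulation point. -/
def CAP (lam : Cardinal.{u}) (X : Type u) [TopologicalSpace X] : Prop :=
  ∀ A : Set X, #A = lam →
    ∃ x : X, ∀ U : Set X, IsOpen U → x ∈ U → #(↥(U ∩ A)) = #A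

/-!
(3) ⇒ (1): `F`-compactness is preserved by products, and an `F`-limit point of an enumeration
of a set `A` of size `λ` along a uniform `F` is a complete accumulation point of `A`.

(2) ⇒ (3): if every uniform ultrafilter `D` on `λ` had a member `X_D` of `K` with a sequence
`s_D` without `D`-limit point, form the product of the `X_D`, indexed via a surjection from
`𝒫(𝒫 λ)` onto the uniform ultrafilters. The diagonal sequence `(s_D)_D` has a point `p` all of
whose neighbourhoods contain `λ` of its terms: a complete accumulation point of its range if the
range has size `λ`, otherwise (by regularity of `λ`) the value of a fibre of size `λ`. So it
converges to `p` along some uniform ultrafilter `D`, and the `D`-th coordinate of `p` is a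
`D`-limit point of `s_D`.
-/
open Filter Set Function Topology

variable {lam : Cardinal.{u}} {α : Type u}

lemma fLimitPt_iff_tendsto {I X : Type*} [TopologicalSpace X] {F : Filter I} {s : I → X}
    {p : X} : FLimitPt F s p ↔ Tendsto s F (𝓝 p) :=
  tendsto_nhds.symm

lemma exists_uniform_ultrafilter_le (hreg : lam.IsRegular) (hα : #α = lam) {G : Filter α}
    (hG : ∀ t ∈ G, lam ≤ #t) :
    ∃ D : Ultrafilter α, (∀ A ∈ D, #A = lam) ∧ (D : Filter α) ≤ G := by
  have : (G ⊓ cocardinal α hreg).NeBot :=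
    inf_neBot_iff_frequently_left.mpr fun ht => frequently_cocardinal_mem.mpr (hG _ ht)
  obtain ⟨D, hD⟩ := Ultrafilter.exists_le (G ⊓ cocardinal α hreg)
  refine ⟨D, fun A hA => le_antisymm (hα ▸ mk_set_le A) ?_, hD.trans inf_le_left⟩
  exact frequently_cocardinal_mem.mp
    ((Eventually.frequently hA).filter_mono (hD.trans inf_le_right))

lemma FCompact.pi {I J : Type*} {F : Filter I} {X : J → Type*} [∀ j, TopologicalSpace (X j)]
    (hc : ∀ j, FCompact F (X j)) : FCompact F (∀ j, X j) := by
  intro s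
  choose p hp using fun j => hc j fun i => s i j
  exact ⟨p, fLimitPt_iff_tendsto.mpr
    (tendsto_pi_nhds.mpr fun j => fLimitPt_iff_tendsto.mp (hp j))⟩

lemma FCompact.cap {X : Type u} [TopologicalSpace X] {F : Filter α} (hF : ∀ A ∈ F, #A = lam)
    (hc : FCompact F X) : CAP lam X := by
  intro A hA
  obtain ⟨e⟩ : Nonempty (α ≃ A) := Cardinal.eq.mp (by rw [← mk_univ, hF _ univ_mem, hA])
  obtain ⟨p, hp⟩ := hc fun i => (e i : X)
  refine ⟨p, fun U hU hpU => le_antisymm (mk_le_mk_of_subset inter_subset_right) ?_⟩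
  calc #A = #{i | (e i : X) ∈ U} := (hF _ (hp U hU hpU)).trans hA.symm |>.symm
    _ ≤ #(U ∩ A : Set X) :=
      mk_le_of_injective (f := fun i => ⟨e i, i.2, (e i).2⟩) fun i j h =>
        Subtype.ext (e.injective (Subtype.ext (congrArg (fun z : ↥(U ∩ A) => (z : X)) h)))

lemma exists_le_mk_preimage_singleton_of_mk_range_lt {β : Type u} (hreg : lam.IsRegular)
    (hα : #α = lam) {y : α → β} (hy : #(range y) < lam) : ∃ x, lam ≤ #(y ⁻¹' {x}) := by
  obtain ⟨⟨x, hx⟩, hfiber⟩ := infinite_pigeonhole_card (rangeFactorization y) lam hα.ge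
    hreg.aleph0_le (hreg.cof_ord.symm ▸ hy)
  refine ⟨x, hfiber.trans_eq ?_⟩
  congr 2
  ext a
  simp [rangeFactorization_eq_iff]

lemma CAP.exists_forall_nhds_le_mk_preimage {X : Type u} [TopologicalSpace X]
    (hreg : lam.IsRegular) (hX : CAP lam X) (hα : #α = lam) (y : α → X) :
    ∃ p, ∀ U ∈ 𝓝 p, lam ≤ #(y ⁻¹' U) := by
  rcases (hα ▸ mk_range_le : #(range y) ≤ lam).eq_or_lt with hrange | hrange
  · obtain ⟨p, hp⟩ := hX _ hrange
    refine ⟨p, fun U hU => ?_⟩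
    obtain ⟨V, hVU, hV, hpV⟩ := mem_nhds_iff.mp hU
    calc lam = #(V ∩ range y : Set X) := ((hp V hV hpV).trans hrange).symm
      _ ≤ #(y ⁻¹' V) := image_preimage_eq_inter_range ▸ mk_image_le
      _ ≤ #(y ⁻¹' U) := mk_le_mk_of_subset (preimage_mono hVU)
  · obtain ⟨x, hx⟩ := exists_le_mk_preimage_singleton_of_mk_range_lt hreg hα hrange
    exact ⟨x, fun U hU => hx.trans
      (mk_le_mk_of_subset (preimage_mono (singleton_subset_iff.mpr (mem_of_mem_nhds hU))))⟩

lemma CAP.exists_uniform_ultrafilter_tendsto {X : Type u} [TopologicalSpace X]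
    (hreg : lam.IsRegular) (hX : CAP lam X) (hα : #α = lam) (y : α → X) :
    ∃ D : Ultrafilter α, (∀ A ∈ D, #A = lam) ∧ ∃ p, Tendsto y D (𝓝 p) := by
  obtain ⟨p, hp⟩ := hX.exists_forall_nhds_le_mk_preimage hreg hα y
  obtain ⟨D, hD, hle⟩ := exists_uniform_ultrafilter_le hreg hα (G := comap y (𝓝 p)) <| by
    rintro t ⟨U, hU, hUt⟩
    exact (hp U hU).trans (mk_le_mk_of_subset hUt)
  exact ⟨D, hD, p, tendsto_iff_comap.mpr hle⟩

theorem exists_uniform_ultrafilter_forall_fCompact_of_cap_pi (hreg : lam.IsRegular)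
    (hα : #α = lam) (K : ∀ X : Type u, TopologicalSpace X → Prop)
    (h : ∀ (X : Set (Set α) → Type u) [t : ∀ j, TopologicalSpace (X j)],
      (∀ j, K (X j) (t j)) → CAP lam (∀ j, X j)) :
    ∃ F : Ultrafilter α, (∀ A ∈ F, #A = lam) ∧
      ∀ (X : Type u) [t : TopologicalSpace X], K X t → FCompact (F : Filter α) X := by
  by_contra! hbad
  let 𝒰 := {F : Ultrafilter α // ∀ A ∈ F, #A = lam}
  choose X t hK s hs using fun F : 𝒰 => by simpa [FCompact] using hbad F.1 F.2
  have : Nonempty 𝒰 := by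
    obtain ⟨D, hD, -⟩ := exists_uniform_ultrafilter_le hreg hα (G := ⊤) <| by
      rintro _ ht
      rw [mem_top.mp ht, mk_univ, hα]
    exact ⟨⟨D, hD⟩⟩
  have hsets : Injective fun F : 𝒰 => (F.1 : Filter α).sets := fun F G hFG =>
    Subtype.ext (Ultrafilter.coe_injective (Filter.filter_eq hFG))
  set σ := invFun fun F : 𝒰 => (F.1 : Filter α).sets
  obtain ⟨D, hD, p, hp⟩ := (h (fun j => X (σ j)) fun j => hK (σ j)).exists_uniform_ultrafilter_tendsto
    hreg hα fun a j => s (σ j) a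
  obtain ⟨j, hj⟩ := invFun_surjective hsets ⟨D, hD⟩
  have hσj : ((σ j).1 : Filter α) = D := congrArg (fun F : 𝒰 => (F.1 : Filter α)) hj
  exact hs (σ j) (p j) (fLimitPt_iff_tendsto.mpr (hσj ▸ tendsto_pi_nhds.mp hp j))

theorem stmt_7_general (lam : Cardinal.{u}) (hreg : lam.IsRegular)
    (K : ∀ X : Type u, TopologicalSpace X → Prop) :
    List.TFAE
      [ -- (1) every product of members of `K` satisfies `CAP lam`
        ∀ (J : Type u) (X : J → Type u) [t : ∀ j, TopologicalSpace (X j)],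
          (∀ j, K (X j) (t j)) → CAP lam (∀ j, X j),
        -- (2) every product of `2 ^ 2 ^ lam` many members of `K` satisfies
        -- `CAP lam`
        ∀ (J : Type u), #J = (2 : Cardinal.{u}) ^ ((2 : Cardinal.{u}) ^ lam) →
          ∀ (X : J → Type u) [t : ∀ j, TopologicalSpace (X j)],
            (∀ j, K (X j) (t j)) → CAP lam (∀ j, X j),
        -- (3) there is a uniform ultrafilter `F` over (a set of cardinality)
        -- `lam` such that every member of `K` is `F`-compact
        ∃ F : Ultrafilter lam.out, (∀ A ∈ F, #A = lam) ∧
          ∀ (X : Type u) [t : TopologicalSpace X], K X t →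
            FCompact (F : Filter lam.out) X ] := by
  tfae_have 1 → 2 := fun h J _ => h J
  tfae_have 2 → 3 := fun h =>
    exists_uniform_ultrafilter_forall_fCompact_of_cap_pi hreg (mk_out lam) K
      (h _ (by rw [mk_set, mk_set, mk_out]))
  tfae_have 3 → 1 := fun ⟨F, hF, hK⟩ _ X _ hXK => (FCompact.pi fun j => hK (X j) (hXK j)).cap hF
  tfae_finish

theorem stmt_7 (lam : Cardinal.{u}) (hreg : lam.IsRegular)
    (K : ∀ X : Type u, TopologicalSpace X → Prop)
    (hne : ∀ (X : Type u) (t : TopologicalSpace X), K X t → Nonempty X) :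
    List.TFAE
      [ -- (1) every product of members of `K` satisfies `CAP lam`
        ∀ (J : Type u) (X : J → Type u) [t : ∀ j, TopologicalSpace (X j)],
          (∀ j, K (X j) (t j)) → CAP lam (∀ j, X j),
        -- (2) every product of `2 ^ 2 ^ lam` many members of `K` satisfies
        -- `CAP lam`
        ∀ (J : Type u), #J = (2 : Cardinal.{u}) ^ ((2 : Cardinal.{u}) ^ lam) →
          ∀ (X : J → Type u) [t : ∀ j, TopologicalSpace (X j)],
            (∀ j, K (X j) (t j)) → CAP lam (∀ j, X j),
        -- (3) there is a uniform ultrafilter `F` over (a set of cardinality)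
        -- `lam` such that every member of `K` is `F`-compact
        ∃ F : Ultrafilter lam.out, (∀ A ∈ F, #A = lam) ∧
          ∀ (X : Type u) [t : TopologicalSpace X], K X t →
            FCompact (F : Filter lam.out) X ] :=
  stmt_7_general lam hreg K
end

section
/- Let μ ≤ λ be infinite cardinals and let K be a class of nonempty topological spaces. Then every product of members of K (repetitions among the factors allowed) is [μ,λ]-compact if and only if there exists a (μ,λ)-regular ultrafilter D over the set [λ]^{<μ} of subsets of λ of cardinality less than μ such that every member of K is D-compact. -/
universe u v

open Cardinal

/-- `X` is `[μ,λ]`-compact: every open cover of cardinality at most `lam` has a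
subcover of cardinality strictly less than `μ`. -/
def IntervalCompact (μ lam : Cardinal.{u}) (X : Type u) [TopologicalSpace X] : Prop :=
  ∀ 𝒰 : Set (Set X), #𝒰 ≤ lam → (∀ U ∈ 𝒰, IsOpen U) → ⋃₀ 𝒰 = Set.univ →
    ∃ 𝒱 ⊆ 𝒰, #𝒱 < μ ∧ ⋃₀ 𝒱 = Set.univ


lemma flimit_iff_tendsto {I X : Type*} [TopologicalSpace X] (F : Filter I) (s : I → X)
    (p : X) : FLimitPt F s p ↔ Filter.Tendsto s F (nhds p) := by
  constructor
  · intro h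
    rw [Filter.tendsto_def]
    intro U hU
    rcases mem_nhds_iff.mp hU with ⟨V, hVU, hV, hpV⟩
    exact F.mem_of_superset (h V hV hpV) (fun i hi => hVU hi)
  · intro h U hU hpU
    exact h (hU.mem_nhds hpU)

lemma fcompact_pi {ι : Type*} {X : ι → Type*} [∀ i, TopologicalSpace (X i)] {I : Type*}
    (F : Filter I) (h : ∀ i, FCompact F (X i)) : FCompact F (∀ i, X i) := by
  intro s
  choose p hp using fun i => h i (fun j => s j i)
  refine ⟨p, (flimit_iff_tendsto F s p).mpr ?_⟩
  rw [tendsto_pi_nhds]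
  exact fun i => (flimit_iff_tendsto F _ (p i)).mp (hp i)

lemma regular_fcompact {L S X : Type u} [TopologicalSpace X] {μ lam : Cardinal.{u}}
    (hμ : ℵ₀ ≤ μ) (D : Ultrafilter S) (f : L → Set S) (hfD : ∀ α, f α ∈ D)
    (hreg : ∀ s, #{α | s ∈ f α} < μ) (hLlam : lam ≤ #L)
    (hX : FCompact (D : Filter S) X) : IntervalCompact μ lam X := by
  intro 𝒰 hcard hopen hcover
  by_cases hXe : Nonempty X
  · by_contra hno
    push_neg at hno
    have h𝒰ne : 𝒰.Nonempty := by
      rcases hXe with ⟨x⟩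
      have : x ∈ ⋃₀ 𝒰 := hcover ▸ Set.mem_univ x
      rcases this with ⟨U, hU, _⟩
      exact ⟨U, hU⟩
    have : Nonempty (↥𝒰 ↪ L) := by
      rw [← Cardinal.le_def]; exact hcard.trans hLlam
    rcases this with ⟨e⟩
    have : Nonempty ↥𝒰 := h𝒰ne.to_subtype
    have hgs : Function.Surjective (Function.invFun e) := Function.invFun_surjective e.injective
    set g : L → ↥𝒰 := Function.invFun e with hg
    have hch : ∀ s : S, ∃ x : X, x ∉ ⋃₀ (Subtype.val '' (g '' {α | s ∈ f α})) := by
      intro s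
      have hsub : Subtype.val '' (g '' {α | s ∈ f α}) ⊆ 𝒰 := by
        rintro U ⟨u, _, rfl⟩; exact u.2
      have hlt : #(Subtype.val '' (g '' {α | s ∈ f α})) < μ :=
        lt_of_le_of_lt ((Cardinal.mk_image_le).trans Cardinal.mk_image_le) (hreg s)
      have := hno _ hsub hlt
      rcases Set.ne_univ_iff_exists_notMem _ |>.mp this with ⟨x, hx⟩
      exact ⟨x, hx⟩
    choose x hx using hch
    rcases hX x with ⟨p, hp⟩
    have hpU : p ∈ ⋃₀ 𝒰 := hcover ▸ Set.mem_univ p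
    rcases hpU with ⟨U, hU𝒰, hpU⟩
    rcases hgs ⟨U, hU𝒰⟩ with ⟨α₀, hα₀⟩
    have h1 : {s | x s ∈ U} ∈ D := hp U (hopen U hU𝒰) hpU
    have h2 : {s | x s ∈ U} ∩ f α₀ ∈ D := (D : Filter S).inter_sets h1 (hfD α₀)
    rcases Filter.nonempty_of_mem h2 with ⟨s, hs1, hs2⟩
    apply hx s
    exact ⟨U, ⟨g α₀, ⟨α₀, hs2, rfl⟩, by rw [hα₀]⟩, hs1⟩
  · refine ⟨∅, Set.empty_subset _, ?_, ?_⟩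
    · simpa using (aleph0_pos.trans_le hμ)
    · rw [Set.sUnion_empty, eq_comm, Set.univ_eq_empty_iff]
      exact not_nonempty_iff.mp hXe

lemma exists_pt {L P : Type u} [TopologicalSpace P] [Nonempty P] {μ lam : Cardinal.{u}}
    (hμ : ℵ₀ ≤ μ) (hml : μ ≤ lam) (hL : #L = lam)
    (hIC : IntervalCompact μ lam P) (y : {A : Set L // #A < μ} → P) :
    ∃ p : P, ∀ F : Finset L,
      p ∈ closure {z | ∃ s : {A : Set L // #A < μ}, ↑F ⊆ s.1 ∧ z = y s} := by
  by_contra hno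
  push_neg at hno
  set C : Finset L → Set P :=
    fun F => closure {z | ∃ s : {A : Set L // #A < μ}, ↑F ⊆ s.1 ∧ z = y s} with hC
  have hinf : Infinite L := by rw [Cardinal.infinite_iff, hL]; exact hμ.trans hml
  set 𝒰 : Set (Set P) := Set.range (fun F => (C F)ᶜ) with h𝒰
  have hcard : #𝒰 ≤ lam :=
    le_trans Cardinal.mk_range_le (by rw [Cardinal.mk_finset_of_infinite, hL])
  have hopen : ∀ U ∈ 𝒰, IsOpen U := by rintro U ⟨F, rfl⟩; exact isClosed_closure.isOpen_compl
  have hcover : ⋃₀ 𝒰 = Set.univ := by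
    ext p; simp only [Set.mem_univ, iff_true]
    rcases hno p with ⟨F, hF⟩
    exact ⟨(C F)ᶜ, ⟨F, rfl⟩, hF⟩
  rcases hIC 𝒰 hcard hopen hcover with ⟨𝒱, h𝒱𝒰, h𝒱μ, h𝒱cov⟩
  have hFs : ∀ V : ↥𝒱, ∃ F : Finset L, (V : Set P) = (C F)ᶜ := by
    intro V
    rcases h𝒱𝒰 V.2 with ⟨F, hF⟩
    exact ⟨F, hF.symm⟩
  choose Fv hFv using hFs
  set A : Set L := ⋃ V : ↥𝒱, ↑(Fv V) with hAdef
  have hA : #A < μ := by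
    by_cases hfin : Finite ↥𝒱
    · have : A.Finite := Set.finite_iUnion (fun V => (Fv V).finite_toSet)
      exact lt_of_lt_of_le (Cardinal.lt_aleph0_of_finite _) hμ
    · have h1 : ℵ₀ ≤ #↥𝒱 := by
        rw [← Cardinal.infinite_iff]; exact not_finite_iff_infinite.mp hfin
      apply lt_of_le_of_lt (Cardinal.mk_iUnion_le _)
      calc #↥𝒱 * ⨆ V : ↥𝒱, #↑(↑(Fv V) : Set L)
          ≤ #↥𝒱 * ℵ₀ := by
            apply mul_le_mul_right
            exact ciSup_le' (fun V => (Cardinal.lt_aleph0_of_finite _).le)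
        _ = #↥𝒱 := by rw [Cardinal.mul_aleph0_eq h1]
        _ < μ := h𝒱μ
  have hys : y ⟨A, hA⟩ ∈ ⋃₀ 𝒱 := h𝒱cov ▸ Set.mem_univ _
  rcases hys with ⟨V, hV, hyV⟩
  have heq : V = (C (Fv ⟨V, hV⟩))ᶜ := hFv ⟨V, hV⟩
  rw [heq] at hyV
  apply hyV
  apply subset_closure
  refine ⟨⟨A, hA⟩, ?_, rfl⟩
  exact Set.subset_iUnion (fun (W : ↥𝒱) => (↑(Fv W) : Set L)) ⟨V, hV⟩

/-- The family of "neighborhood traces" of the sequence `x`. -/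
def Fam {S X : Type*} [TopologicalSpace X] (x : S → X) : Set (Set (Set S)) :=
  Set.range (fun p => {W : Set S | ∃ U : Set X, IsOpen U ∧ p ∈ U ∧ W = x ⁻¹' U})

lemma forward_dir (μ lam : Cardinal.{u}) (hμ : ℵ₀ ≤ μ) (hml : μ ≤ lam)
    (K : ∀ X : Type u, TopologicalSpace X → Prop)
    (hne : ∀ (X : Type u) (t : TopologicalSpace X), K X t → Nonempty X)
    (h : ∀ (J : Type u) (X : J → Type u) [t : ∀ j, TopologicalSpace (X j)],
        (∀ j, K (X j) (t j)) → IntervalCompact μ lam (∀ j, X j)) :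
    ∃ D : Ultrafilter {A : Set lam.out // #A < μ},
        (∃ f : lam.out → Set {A : Set lam.out // #A < μ},
            (∀ α, f α ∈ D) ∧ ∀ s, #{α | s ∈ f α} < μ) ∧
        ∀ (X : Type u) [t : TopologicalSpace X], K X t →
          FCompact (D : Filter {A : Set lam.out // #A < μ}) X := by
  set L := lam.out with hLdef
  set S := {A : Set L // #A < μ} with hSdef
  set B : L → Set S := fun α => {s | α ∈ s.1} with hBdef
  let I := {ℱ : Set (Set (Set S)) // ∃ (X : Type u) (t : TopologicalSpace X) (x : S → X),
    K X t ∧ ℱ = @Fam S X t x}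
  obtain ⟨XI, tI, xI, hKI, hFI⟩ : ∃ (XI : I → Type u) (tI : ∀ i, TopologicalSpace (XI i))
      (xI : ∀ i, S → XI i), (∀ i, K (XI i) (tI i)) ∧
      (∀ i, i.1 = @Fam S (XI i) (tI i) (xI i)) := by
    choose XI tI xI h1 h2 using fun i : I => i.2
    exact ⟨XI, tI, xI, h1, h2⟩
  letI : ∀ i, TopologicalSpace (XI i) := tI
  haveI hneP : ∀ i, Nonempty (XI i) := fun i => hne _ _ (hKI i)
  haveI : Nonempty (∀ i, XI i) := ⟨fun i => Classical.arbitrary _⟩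
  have hICP : IntervalCompact μ lam (∀ i, XI i) := h I XI hKI
  set y : S → (∀ i, XI i) := fun s i => xI i s with hydef
  obtain ⟨p, hp⟩ := exists_pt hμ hml (Cardinal.mk_out lam) hICP y
  set G : Filter S := Filter.comap y (nhds p) ⊓ Filter.generate (Set.range B) with hGdef
  have hGne : G.NeBot := by
    rw [Filter.neBot_iff]
    intro hbot
    have hem : (∅ : Set S) ∈ G := by rw [hbot]; exact Filter.mem_bot
    rw [Filter.mem_inf_iff] at hem
    obtain ⟨t₁, ht₁, t₂, ht₂, hem⟩ := hem
    rw [Filter.mem_comap] at ht₁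
    obtain ⟨W, hW, hWt₁⟩ := ht₁
    rcases mem_nhds_iff.mp hW with ⟨V, hVW, hVopen, hpV⟩
    rw [Filter.mem_generate_iff] at ht₂
    obtain ⟨u, huB, hufin, hut₂⟩ := ht₂
    haveI := hufin.to_subtype
    have hα : ∀ w : ↥u, ∃ α : L, B α = ↑w := fun w => huB w.2
    choose αf hαf using hα
    have hTfin : (Set.range αf).Finite := Set.finite_range αf
    set F : Finset L := hTfin.toFinset with hFdef
    have hclos := hp F
    rw [mem_closure_iff] at hclos
    obtain ⟨z, hzV, s, hFs, hzy⟩ := hclos V hVopen hpV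
    have hs1 : s ∈ t₁ := hWt₁ (by simp only [Set.mem_preimage]; rw [← hzy]; exact hVW hzV)
    have hs2 : s ∈ t₂ := by
      apply hut₂
      intro w hw
      have : B (αf ⟨w, hw⟩) = w := hαf ⟨w, hw⟩
      rw [← this]
      have : αf ⟨w, hw⟩ ∈ (F : Set L) := by
        rw [hFdef, Set.Finite.coe_toFinset]
        exact ⟨⟨w, hw⟩, rfl⟩
      exact hFs this
    have : s ∈ (∅ : Set S) := hem ▸ Set.mem_inter hs1 hs2
    exact this
  set D : Ultrafilter S := @Ultrafilter.of S G hGne with hDdef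
  have hle : (D : Filter S) ≤ G := Ultrafilter.of_le G
  refine ⟨D, ⟨B, ?_, ?_⟩, ?_⟩
  · intro α
    apply hle
    exact Filter.mem_inf_of_right (Filter.mem_generate_of_mem ⟨α, rfl⟩)
  · intro s
    have : {α | s ∈ B α} = s.1 := by ext α; simp [hBdef]
    rw [this]; exact s.2
  · intro X t hKX
    intro x
    set i : I := ⟨@Fam S X t x, X, t, x, hKX, rfl⟩ with hidef
    have hFeq : @Fam S X t x = @Fam S (XI i) (tI i) (xI i) := hFI i
    have hmem : {W : Set S | ∃ U : Set (XI i), IsOpen U ∧ p i ∈ U ∧ W = xI i ⁻¹' U}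
        ∈ @Fam S X t x := by
      rw [hFeq]; exact ⟨p i, by rfl⟩
    obtain ⟨q, hq⟩ := hmem
    refine ⟨q, ?_⟩
    intro U hU hqU
    have hxU : x ⁻¹' U ∈ {W : Set S | ∃ U' : Set (XI i), IsOpen U' ∧ p i ∈ U' ∧
        W = xI i ⁻¹' U'} := by
      rw [← hq]; exact ⟨U, hU, hqU, rfl⟩
    obtain ⟨U', hU'open, hpU', hxx⟩ := hxU
    have key : {s | x s ∈ U} = y ⁻¹' ((fun z => z i) ⁻¹' U') := by
      ext s
      simp only [Set.mem_setOf_eq, Set.mem_preimage]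
      constructor
      · intro hs
        have : s ∈ xI i ⁻¹' U' := hxx ▸ hs
        exact this
      · intro hs
        have : s ∈ x ⁻¹' U := by rw [hxx]; exact hs
        exact this
    rw [key]
    apply hle
    apply Filter.mem_inf_of_left
    apply Filter.preimage_mem_comap
    exact ((continuous_apply i).isOpen_preimage U' hU'open).mem_nhds hpU'

theorem stmt_9 (μ lam : Cardinal.{u}) (hμ : ℵ₀ ≤ μ) (hml : μ ≤ lam)
    (K : ∀ X : Type u, TopologicalSpace X → Prop)
    (hne : ∀ (X : Type u) (t : TopologicalSpace X), K X t → Nonempty X) :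
    -- every product of members of `K` is `[μ,λ]`-compact
    (∀ (J : Type u) (X : J → Type u) [t : ∀ j, TopologicalSpace (X j)],
        (∀ j, K (X j) (t j)) → IntervalCompact μ lam (∀ j, X j))
    ↔ -- iff there is a `(μ,λ)`-regular ultrafilter `D` over `[λ]^{<μ}` such
      -- that every member of `K` is `D`-compact
      ∃ D : Ultrafilter {A : Set lam.out // #A < μ},
        (∃ f : lam.out → Set {A : Set lam.out // #A < μ},
            (∀ α, f α ∈ D) ∧ ∀ s, #{α | s ∈ f α} < μ) ∧
        ∀ (X : Type u) [t : TopologicalSpace X], K X t →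
          FCompact (D : Filter {A : Set lam.out // #A < μ}) X := by
  constructor
  · intro h
    exact forward_dir μ lam hμ hml K hne h
  · rintro ⟨D, ⟨f, hfD, hreg⟩, hDK⟩
    intro J X t hKJ
    have hFC : FCompact (D : Filter {A : Set lam.out // #A < μ}) (∀ j, X j) :=
      fcompact_pi _ (fun j => hDK (X j) (hKJ j))
    exact regular_fcompact hμ D f hfD hreg (le_of_eq (Cardinal.mk_out lam).symm) hFC
end
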